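/- arXiv:1210.5061 — 2 statements merged into one kernel-verified Lean document; each statement's English description precedes it below -/
import Mathlib

section
/- For any ring R, any A ∈ M_n(R), and any invertible T ∈ GL_n(Z(R)) with central entries, sdet(T⁻¹AT) = sdet(A). -/
/-!
For `C` with central entries, expanding the ordered products in `sdet (C * A)` and pulling the
central factors to the front turns the sum over the row permutation `α` into
`∑ α, sgn α • ∏ i, C (α i) (k i) = det (C.submatrix id k)` for each choice `k` of summation
indices. This vanishes unless `k` is a permutation `σ`, where it is `sgn σ • det C`, so
`sdet (C * A) = det C • sdet A`. As `sdet` is invariant under transposition, the same holds for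
`A * C`, whence `sdet (S * A * T) = det (T * S) • sdet A = sdet A`. The entries of `S = T⁻¹` are
central because `S`, like `T`, commutes with every scalar matrix.
-/

open Matrix Polynomial

/-- The symmetric determinant of a square matrix over a possibly noncommutative ring:
`sdet A = Σ_{α,β ∈ S_n} sgn α · sgn β · a_{α 1, β 1} ⋯ a_{α n, β n}` (ordered product). -/
def sdet {R : Type*} [Ring R] {n : ℕ} (A : Matrix (Fin n) (Fin n) R) : R :=
  ∑ α : Equiv.Perm (Fin n), ∑ β : Equiv.Perm (Fin n),
    ((Equiv.Perm.sign α : ℤ) * (Equiv.Perm.sign β : ℤ)) •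
      (List.ofFn fun i : Fin n => A (α i) (β i)).prod

/-- The preadjoint matrix `A*`: its `(r,s)` entry is the sum over `α, β ∈ S_n`
with `α s = s` and `β s = r` of `sgn α · sgn β` times the ordered product of the
entries `a_{α i, β i}` for `i ≠ s`. -/
def preadj {R : Type*} [Ring R] {n : ℕ} (A : Matrix (Fin n) (Fin n) R) :
    Matrix (Fin n) (Fin n) R :=
  fun r s =>
    ∑ α ∈ Finset.univ.filter (fun α : Equiv.Perm (Fin n) => α s = s),
      ∑ β ∈ Finset.univ.filter (fun β : Equiv.Perm (Fin n) => β s = r),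
        ((Equiv.Perm.sign α : ℤ) * (Equiv.Perm.sign β : ℤ)) •
          (((List.finRange n).filter (fun i => i ≠ s)).map fun i => A (α i) (β i)).prod

open Equiv

theorem List.prod_ofFn_sum {R ι : Type*} [Semiring R] [Fintype ι] :
    ∀ {n : ℕ} (f : Fin n → ι → R),
      (List.ofFn fun i => ∑ j, f i j).prod
        = ∑ p : Fin n → ι, (List.ofFn fun i => f i (p i)).prod
  | 0, f => by simp
  | n + 1, f => by
    rw [← (Fin.consEquiv fun _ => ι).sum_comp, Fintype.sum_prod_type, List.ofFn_succ,
      List.prod_cons, List.prod_ofFn_sum, Finset.sum_mul_sum]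
    simp [List.ofFn_succ]

theorem List.prod_ofFn_smul {K R : Type*} [CommMonoid K] [Monoid R] [MulAction K R]
    [IsScalarTower K R R] [SMulCommClass K R R] :
    ∀ {n : ℕ} (c : Fin n → K) (a : Fin n → R),
      (List.ofFn fun i => c i • a i).prod = (∏ i, c i) • (List.ofFn a).prod
  | 0, _, _ => by simp
  | n + 1, c, a => by
    rw [List.ofFn_succ, List.prod_cons, List.prod_ofFn_smul, smul_mul_smul_comm,
      Fin.prod_univ_succ, List.ofFn_succ, List.prod_cons]

theorem Matrix.det_submatrix_eq_zero_of_not_bijective {K n : Type*} [CommRing K] [Fintype n]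
    [DecidableEq n] (C : Matrix n n K) {k : n → n} (hk : ¬ Function.Bijective k) :
    det (C.submatrix id k) = 0 := by
  rw [← Finite.injective_iff_bijective, Function.Injective] at hk
  push Not at hk
  obtain ⟨i, j, hij, hne⟩ := hk
  exact det_zero_of_column_eq hne fun r => by simp [hij]

theorem Matrix.units_inv_apply_mem_center {R n : Type*} [Ring R] [Fintype n] [DecidableEq n]
    (T : (Matrix n n R)ˣ) (hT : ∀ i j, (T : Matrix n n R) i j ∈ Set.center R) (i j : n) :
    (↑T⁻¹ : Matrix n n R) i j ∈ Set.center R := by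
  refine Semigroup.mem_center_iff.2 fun x => ?_
  have hxT : Commute (scalar n x) (T : Matrix n n R) :=
    scalar_commute_iff.2 <| ext fun a b => (Semigroup.mem_center_iff.1 (hT a b) x)
  exact congr_fun₂ (scalar_commute_iff.1 hxT.units_inv_right) i j

theorem sdet_transpose {R : Type*} [Ring R] {n : ℕ} (A : Matrix (Fin n) (Fin n) R) :
    sdet Aᵀ = sdet A := by
  rw [sdet, sdet, Finset.sum_comm]
  simp only [transpose_apply, mul_comm]

section Algebra

variable {K R : Type*} [CommRing K] [Ring R] [Algebra K R] {n : ℕ}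

theorem Matrix.transpose_mul_map_algebraMap {l m o : Type*} [Fintype m]
    (A : Matrix l m R) (C : Matrix m o K) :
    (A * C.map (algebraMap K R))ᵀ = Cᵀ.map (algebraMap K R) * Aᵀ := by
  ext i j
  simp [mul_apply, Algebra.commutes]

theorem sdet_map_mul (C : Matrix (Fin n) (Fin n) K) (A : Matrix (Fin n) (Fin n) R) :
    sdet (C.map (algebraMap K R) * A) = det C • sdet A := by
  set P : (Fin n → Fin n) → (Fin n → Fin n) → R :=
    fun k l => (List.ofFn fun i => A (k i) (l i)).prod
  have expand (α β : Perm (Fin n)) :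
      (List.ofFn fun i => (C.map (algebraMap K R) * A) (α i) (β i)).prod
        = ∑ k : Fin n → Fin n, (∏ i, C (α i) (k i)) • P k β := by
    simp only [mul_apply, map_apply, ← Algebra.smul_def, List.prod_ofFn_sum, List.prod_ofFn_smul]
    rfl
  have rowSum (k : Fin n → Fin n) (r : R) :
      ∑ α : Perm (Fin n), (Perm.sign α : ℤ) • (∏ i, C (α i) (k i)) • r
        = det (C.submatrix id k) • r := by
    simp only [det_apply, Finset.sum_smul, submatrix_apply, id, Units.smul_def, smul_assoc]
  calc sdet (C.map (algebraMap K R) * A)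
      = ∑ β : Perm (Fin n), ∑ k : Fin n → Fin n,
          (Perm.sign β : ℤ) • det (C.submatrix id k) • P k β := by
        simp only [sdet, expand, mul_smul, Finset.smul_sum]
        rw [Finset.sum_comm]
        refine Finset.sum_congr rfl fun β _ => ?_
        rw [Finset.sum_comm]
        simp only [← rowSum, Finset.smul_sum, smul_comm ((Perm.sign β : ℤ))]
    _ = ∑ β : Perm (Fin n), ∑ σ : Perm (Fin n),
          (Perm.sign β : ℤ) • det (C.submatrix id σ) • P σ β := by
        refine Finset.sum_congr rfl fun β _ => (Fintype.sum_of_injective _ DFunLike.coe_injective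
          _ _ (fun k hk => ?_) fun _ => rfl).symm
        rw [det_submatrix_eq_zero_of_not_bijective C fun hb => hk ⟨Equiv.ofBijective k hb, rfl⟩,
          zero_smul, smul_zero]
    _ = det C • sdet A := by
        simp only [det_permute', sdet, Finset.smul_sum, mul_smul]
        rw [Finset.sum_comm]
        simp only [← Int.cast_smul_eq_zsmul K, smul_smul, mul_comm, mul_assoc]
        rfl

theorem sdet_mul_map (A : Matrix (Fin n) (Fin n) R) (C : Matrix (Fin n) (Fin n) K) :
    sdet (A * C.map (algebraMap K R)) = det C • sdet A := by
  rw [← sdet_transpose, transpose_mul_map_algebraMap, sdet_map_mul, det_transpose, sdet_transpose]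

end Algebra

theorem sdet_conj {R : Type*} [Ring R] {n : ℕ}
    (A T S : Matrix (Fin n) (Fin n) R)
    (hT : ∀ i j, T i j ∈ Set.center R)
    (hST : S * T = 1) (hTS : T * S = 1) :
    sdet (S * A * T) = sdet A := by
  have hS := units_inv_apply_mem_center ⟨T, S, hTS, hST⟩ hT
  let T' : Matrix (Fin n) (Fin n) (Subring.center R) := fun i j => ⟨T i j, hT i j⟩
  let S' : Matrix (Fin n) (Fin n) (Subring.center R) := fun i j => ⟨S i j, hS i j⟩
  have hT' : T = T'.map (algebraMap _ R) := rfl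
  have hS' : S = S'.map (algebraMap _ R) := rfl
  have hTS' : T' * S' = 1 :=
    map_injective (f := algebraMap (Subring.center R) R) Subtype.val_injective <| by
      dsimp only
      rw [Matrix.map_mul, ← hT', ← hS', hTS, Matrix.map_one _ (map_zero _) (map_one _)]
  rw [hT', hS', sdet_mul_map, sdet_map_mul, smul_smul, ← det_mul, hTS', det_one, one_smul]
end

section
/- For any ring R and A ∈ M_n(R), the matrix n·A·A* − tr(A·A*)·I has trace zero and all of its entries lie in the additive subgroup [R,R] of R generated by all commutators uv − vu. -/
open Matrix Polynomial

/-!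
Work in `R ⧸ [R, R]`, where the ordered product of a word is invariant under cyclic rotation.
Reading the factors of `(A * A*) i j` starting at position `j` (via `(Fin.cycleRange j)⁻¹`), this
entry becomes the signed sum, over pairs `(α, β)` with `α 0 = j`, of `∏ₜ A (α' t) (β t)` where `α'`
is `α` with its value at `0` replaced by `i`.

On the diagonal, precomposing `α` and `β` with the rotation `t ↦ t + k` keeps the sign and the class
of the product and moves the constraint `α 0 = i` to `α k = i`; hence all diagonal entries agree
modulo `[R, R]`. Off the diagonal, row `i` occurs in `α'` both at `0` and at `k = α⁻¹ i ≠ 0`; swapping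
`0` and `k` in `α` and then rotating by `k` is a fixed-point-free involution that preserves the
product up to rotation and flips the sign, so the off-diagonal entries vanish modulo `[R, R]`.
-/

abbrev commutatorAddSubgroup (R : Type*) [Ring R] : AddSubgroup R :=
  AddSubgroup.closure {x : R | ∃ u v : R, x = u * v - v * u}

def univTrace (R : Type*) [Ring R] : R →+ R ⧸ commutatorAddSubgroup R :=
  QuotientAddGroup.mk' _

section UnivTrace

variable {R : Type*} [Ring R] {m : ℕ}

lemma univTrace_mul_comm (x y : R) : univTrace R (x * y) = univTrace R (y * x) :=
  QuotientAddGroup.eq_iff_sub_mem.2 (AddSubgroup.subset_closure ⟨x, y, rfl⟩)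

lemma univTrace_prod_ofFn_add_one (f : Fin (m + 1) → R) :
    univTrace R (List.ofFn fun t => f (t + 1)).prod = univTrace R (List.ofFn f).prod := by
  rw [List.ofFn_succ', List.ofFn_succ, List.concat_eq_append, List.prod_append, List.prod_cons,
    univTrace_mul_comm]
  simp [Fin.coeSucc_eq_succ]

lemma univTrace_prod_ofFn_add (f : Fin (m + 1) → R) (k : Fin (m + 1)) :
    univTrace R (List.ofFn fun t => f (t + k)).prod = univTrace R (List.ofFn f).prod := by
  induction k using Fin.induction generalizing f with
  | zero => simp
  | succ k ih =>
    calc univTrace R (List.ofFn fun t => f (t + k.succ)).prod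
        = univTrace R (List.ofFn fun t => f (t + 1 + k.castSucc)).prod := by
          simp only [← Fin.coeSucc_eq_succ, add_assoc, add_comm (1 : Fin (m + 1))]
      _ = univTrace R (List.ofFn fun t => f (t + k.castSucc)).prod :=
          univTrace_prod_ofFn_add_one fun t => f (t + k.castSucc)
      _ = univTrace R (List.ofFn f).prod := ih f

end UnivTrace

section Trace

variable {R : Type*} [Ring R] {n : ℕ}

lemma trace_nsmul_sub_scalar_trace (M : Matrix (Fin n) (Fin n) R) :
    trace (n • M - scalar (Fin n) (trace M)) = 0 := by
  rw [trace_sub, trace_smul, scalar_apply, trace_diagonal, Finset.sum_const, Finset.card_univ,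
    Fintype.card_fin, sub_self]

lemma nsmul_sub_scalar_trace_apply_mem (M : Matrix (Fin n) (Fin n) R)
    (hdiag : ∀ i j, univTrace R (M i i) = univTrace R (M j j))
    (hoff : ∀ i j, i ≠ j → univTrace R (M i j) = 0) (i j : Fin n) :
    (n • M - scalar (Fin n) (trace M)) i j ∈ commutatorAddSubgroup R := by
  refine (QuotientAddGroup.eq_zero_iff _).1 ?_
  change univTrace R _ = 0
  rw [Matrix.sub_apply, Matrix.smul_apply, scalar_apply, map_sub, map_nsmul]
  rcases eq_or_ne i j with rfl | hij
  · rw [diagonal_apply_eq, trace, map_sum]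
    simp [hdiag _ i]
  · rw [diagonal_apply_ne _ hij, hoff i j hij, map_zero, smul_zero, sub_zero]

end Trace

lemma List.finRange_filter_ne {m : ℕ} (j : Fin (m + 1)) :
    (List.finRange (m + 1)).filter (fun i => i ≠ j) = List.ofFn j.succAbove := by
  refine ((List.sortedLT_finRange _).pairwise.filter _).eq_of_mem_iff
    (List.pairwise_ofFn.2 fun _ _ h => Fin.strictMono_succAbove j h) fun a => ?_
  simp [Fin.exists_succAbove_eq_iff]

lemma Equiv.Perm.sign_mul_right_mul_sign_mul_right {ι : Type*} [DecidableEq ι] [Fintype ι]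
    (α β γ : Perm ι) :
    ((sign (α * γ) : ℤ) * sign (β * γ)) = (sign α : ℤ) * sign β := by
  rw [← Units.val_mul, ← Units.val_mul, sign_mul, sign_mul, mul_mul_mul_comm,
    Int.units_mul_self, mul_one]

section Preadj

open Equiv Equiv.Perm Finset

variable {R : Type*} [Ring R] {m : ℕ} (A : Matrix (Fin (m + 1)) (Fin (m + 1)) R)

def preadjTerm (i : Fin (m + 1)) (p : Perm (Fin (m + 1)) × Perm (Fin (m + 1))) : R :=
  ((sign p.1 : ℤ) * sign p.2) • (List.ofFn fun t => A (Function.update p.1 0 i t) (p.2 t)).prod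

lemma mul_prod_filter_ne_eq_prod_ofFn_cycleRange (i j : Fin (m + 1)) (α β : Perm (Fin (m + 1))) :
    A i (β j) * (((List.finRange (m + 1)).filter (fun l => l ≠ j)).map
        fun l => A (α l) (β l)).prod =
      (List.ofFn fun t => A (Function.update (α * j.cycleRange.symm) 0 i t)
        ((β * j.cycleRange.symm) t)).prod := by
  rw [List.finRange_filter_ne, List.map_ofFn, List.ofFn_succ]
  simp [Fin.cycleRange_symm_zero, Fin.cycleRange_symm_succ, Function.comp_def]

lemma mul_preadj_apply (i j : Fin (m + 1)) :
    (A * preadj A) i j = ∑ p ∈ univ.filter (fun p : Perm (Fin (m + 1)) × _ => p.1 0 = j),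
      preadjTerm A i p := by
  let c := Equiv.mulRight j.cycleRange.symm
  calc (A * preadj A) i j
      = ∑ α ∈ univ.filter (fun α : Perm (Fin (m + 1)) => α j = j), ∑ β,
          ((sign α : ℤ) * sign β) • (A i (β j) *
            (((List.finRange (m + 1)).filter (fun l => l ≠ j)).map
              fun l => A (α l) (β l)).prod) := by
        simp only [Matrix.mul_apply, preadj, mul_sum, mul_smul_comm]
        rw [sum_comm]
        refine sum_congr rfl fun α _ => ?_
        rw [← sum_fiberwise univ (fun β : Perm (Fin (m + 1)) => β j)]
        refine sum_congr rfl fun k _ => sum_congr rfl fun β hβ => ?_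
        rw [(mem_filter.1 hβ).2]
    _ = ∑ p ∈ univ.filter (fun α : Perm (Fin (m + 1)) => α j = j) ×ˢ univ,
          preadjTerm A i (c.prodCongr c p) := by
        rw [sum_product]
        refine sum_congr rfl fun α _ => sum_congr rfl fun β _ => ?_
        simp only [preadjTerm, mul_prod_filter_ne_eq_prod_ofFn_cycleRange, prodCongr_apply,
          Prod.map, c, coe_mulRight, sign_mul_right_mul_sign_mul_right]
    _ = _ := by
        refine sum_equiv (c.prodCongr c) (fun p => ?_) fun _ _ => rfl
        simp [c, Fin.cycleRange_symm_zero]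

lemma univTrace_preadjTerm_rotate (α β : Perm (Fin (m + 1))) (k : Fin (m + 1)) :
    univTrace R (preadjTerm A (α k) (α * Equiv.addRight k, β * Equiv.addRight k)) =
      univTrace R (preadjTerm A (α 0) (α, β)) := by
  have hα : Function.update ⇑(α * Equiv.addRight k) 0 (α k) = ⇑(α * Equiv.addRight k) :=
    Function.update_eq_self_iff.2 (by simp)
  simp only [preadjTerm, Function.update_eq_self, hα, sign_mul_right_mul_sign_mul_right, map_zsmul]
  congr 1
  exact univTrace_prod_ofFn_add (fun t => A (α t) (β t)) k

lemma univTrace_mul_preadj_apply_self (i j : Fin (m + 1)) :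
    univTrace R ((A * preadj A) i i) = univTrace R ((A * preadj A) j j) := by
  simp only [mul_preadj_apply, map_sum]
  refine sum_nbij' (fun p => (p.1 * Equiv.addRight (p.1⁻¹ j), p.2 * Equiv.addRight (p.1⁻¹ j)))
    (fun p => (p.1 * Equiv.addRight (p.1⁻¹ i), p.2 * Equiv.addRight (p.1⁻¹ i))) ?_ ?_ ?_ ?_ ?_
  · simp
  · simp
  · rintro ⟨α, β⟩ hα
    obtain rfl := (mem_filter.1 hα).2
    simp [mul_assoc, ← Equiv.addRight_add]
  · rintro ⟨α, β⟩ hα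
    obtain rfl := (mem_filter.1 hα).2
    simp [mul_assoc, ← Equiv.addRight_add]
  · rintro ⟨α, β⟩ hα
    obtain rfl := (mem_filter.1 hα).2
    simpa using (univTrace_preadjTerm_rotate A α β (α⁻¹ j)).symm

def swapRotate (i : Fin (m + 1)) (p : Perm (Fin (m + 1)) × Perm (Fin (m + 1))) :
    Perm (Fin (m + 1)) × Perm (Fin (m + 1)) :=
  (p.1 * swap 0 (p.1⁻¹ i) * Equiv.addRight (p.1⁻¹ i), p.2 * Equiv.addRight (p.1⁻¹ i))

lemma swapRotate_fst_apply_zero (i : Fin (m + 1)) (p : Perm (Fin (m + 1)) × Perm (Fin (m + 1))) :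
    (swapRotate i p).1 0 = p.1 0 := by
  simp [swapRotate]

lemma swapRotate_swapRotate (i : Fin (m + 1)) (p : Perm (Fin (m + 1)) × Perm (Fin (m + 1))) :
    swapRotate i (swapRotate i p) = p := by
  obtain ⟨α, β⟩ := p
  have hinv : (Equiv.addRight (α⁻¹ i))⁻¹ = Equiv.addRight (-α⁻¹ i) :=
    inv_eq_of_mul_eq_one_right (by simp [← Equiv.addRight_add])
  have hk : (α * swap 0 (α⁻¹ i) * Equiv.addRight (α⁻¹ i))⁻¹ i = -α⁻¹ i := by
    simp [Perm.mul_apply]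
  have hconj : Equiv.addRight (α⁻¹ i) * swap 0 (-α⁻¹ i) * Equiv.addRight (-α⁻¹ i) =
      swap 0 (α⁻¹ i) := by
    rw [← hinv, ← Equiv.swap_apply_apply, Equiv.swap_comm]
    simp
  simp only [swapRotate, hk, Prod.mk.injEq]
  constructor
  · rw [mul_assoc _ (Equiv.addRight _), mul_assoc, hconj, mul_assoc, Equiv.swap_mul_self, mul_one]
  · simp [mul_assoc, ← Equiv.addRight_add]

lemma swapRotate_ne {i : Fin (m + 1)} {p : Perm (Fin (m + 1)) × Perm (Fin (m + 1))}
    (h : p.1 0 ≠ i) : swapRotate i p ≠ p := by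
  obtain ⟨α, β⟩ := p
  obtain ⟨k, rfl⟩ := α.surjective i
  intro heq
  have hk : β (0 + k) = β 0 := by simpa [swapRotate] using congrArg (fun p => p.2 0) heq
  rw [zero_add] at hk
  exact h (congrArg α (β.injective hk).symm)

lemma update_swapRotate_fst (α β : Perm (Fin (m + 1))) (k : Fin (m + 1)) :
    Function.update ⇑(swapRotate (α k) (α, β)).1 0 (α k) =
      fun t => Function.update (⇑α) 0 (α k) (t + k) := by
  funext t
  rcases eq_or_ne t 0 with rfl | ht
  · simp [Function.update_apply]
  rcases eq_or_ne (t + k) 0 with htk | htk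
  · simp [swapRotate, ht, htk]
  · have htk' : t + k ≠ k := by simpa using ht
    simp [swapRotate, ht, htk, htk', Function.update_of_ne, Equiv.swap_apply_of_ne_of_ne]

lemma univTrace_preadjTerm_swapRotate {i : Fin (m + 1)}
    {p : Perm (Fin (m + 1)) × Perm (Fin (m + 1))} (h : p.1 0 ≠ i) :
    univTrace R (preadjTerm A i (swapRotate i p)) = -univTrace R (preadjTerm A i p) := by
  obtain ⟨α, β⟩ := p
  obtain ⟨k, rfl⟩ := α.surjective i
  have hk : k ≠ 0 := by rintro rfl; exact h rfl
  have hsign : ((sign (swapRotate (α k) (α, β)).1 : ℤ) * sign (swapRotate (α k) (α, β)).2) =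
      -((sign α : ℤ) * sign β) := by
    simp only [swapRotate, sign_mul_right_mul_sign_mul_right]
    simp [sign_swap hk.symm]
  have hsnd : ⇑(swapRotate (α k) (α, β)).2 = fun t => β (t + k) := by
    funext t
    simp [swapRotate]
  simp only [preadjTerm, update_swapRotate_fst, hsign, hsnd, neg_smul, map_neg, map_zsmul]
  congr 2
  exact univTrace_prod_ofFn_add (fun t => A (Function.update α 0 (α k) t) (β t)) k

lemma univTrace_mul_preadj_apply_of_ne {i j : Fin (m + 1)} (hij : i ≠ j) :
    univTrace R ((A * preadj A) i j) = 0 := by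
  rw [mul_preadj_apply, map_sum]
  have hne {p : Perm (Fin (m + 1)) × Perm (Fin (m + 1))}
      (hp : p ∈ univ.filter fun p => p.1 0 = j) : p.1 0 ≠ i :=
    (mem_filter.1 hp).2.trans_ne hij.symm
  refine sum_involution (fun p _ => swapRotate i p)
    (fun p hp => by rw [univTrace_preadjTerm_swapRotate A (hne hp), add_neg_cancel])
    (fun p hp _ => swapRotate_ne (hne hp)) (fun p hp => ?_) (fun p _ => swapRotate_swapRotate i p)
  simpa [swapRotate_fst_apply_zero] using hp

end Preadj

theorem mul_preadj_trace_zero_and_commutator {R : Type*} [Ring R] {n : ℕ}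
    (A : Matrix (Fin n) (Fin n) R) :
    Matrix.trace (n • (A * preadj A) - Matrix.scalar (Fin n) (Matrix.trace (A * preadj A))) = 0 ∧
    ∀ i j, (n • (A * preadj A) - Matrix.scalar (Fin n) (Matrix.trace (A * preadj A))) i j ∈
      AddSubgroup.closure {x : R | ∃ u v : R, x = u * v - v * u} := by
  refine ⟨trace_nsmul_sub_scalar_trace _, ?_⟩
  cases n with
  | zero => exact fun i => i.elim0
  | succ m =>
    exact nsmul_sub_scalar_trace_apply_mem _ (univTrace_mul_preadj_apply_self A)
      fun _ _ => univTrace_mul_preadj_apply_of_ne A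
end
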